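/- Let n ≥ 4 be even and let EQ_n : {0,1}^n → {0,1} be defined by EQ_n(x) = 1 if and only if (x_1,…,x_{n/2}) = (x_{n/2+1},…,x_n). Then every label-stabilizing stateless protocol on the bidirectional n-ring that computes EQ_n has label complexity L_n = log₂|Σ| ≥ (n−2)/8. -/

import Mathlib

/-- A stateless protocol on the directed graph with node set `Fin n` and edge set
`E`, with label space `Λ`.  `react i` maps the current labeling (of which only
the values on `i`'s incoming edges may be used, per `react_local`) together with
`i`'s input bit to a new labeling (of which only the values on `i`'s outgoing
edges are ever read) together with an output bit. -/
structure StatelessProtocol (n : ℕ) (E : Finset (Fin n × Fin n)) (Λ : Type) where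
  react : Fin n → ({e // e ∈ E} → Λ) → Bool → ({e // e ∈ E} → Λ) × Bool
  react_local : ∀ (i : Fin n) (ℓ ℓ' : {e // e ∈ E} → Λ) (x : Bool),
      (∀ e : {e // e ∈ E}, e.1.2 = i → ℓ e = ℓ' e) → react i ℓ x = react i ℓ' x

namespace StatelessProtocol

variable {n : ℕ} {E : Finset (Fin n × Fin n)} {Λ : Type}

/-- `run P x σ ℓ0 t` is the labeling after `t` time steps of the run of `P` on
input `x` from initial labeling `ℓ0`, where `σ t` is the set of nodes activated
at time step `t + 1`. -/
def run (P : StatelessProtocol n E Λ) (x : Fin n → Bool) (σ : ℕ → Finset (Fin n))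
    (ℓ0 : {e // e ∈ E} → Λ) : ℕ → {e // e ∈ E} → Λ
  | 0 => ℓ0
  | t + 1 => fun e =>
      if e.1.1 ∈ σ t then (P.react e.1.1 (run P x σ ℓ0 t) (x e.1.1)).1 e
      else run P x σ ℓ0 t e

/-- A schedule is `r`-fair if every node is activated at least once in every
window of `r` consecutive time steps. -/
def Fair (σ : ℕ → Finset (Fin n)) (r : ℕ) : Prop :=
  ∀ (i : Fin n) (t : ℕ), ∃ s, t ≤ s ∧ s < t + r ∧ i ∈ σ s

/-- A labeling is stable for input `x` if every reaction function is at a fixed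
point: each node's prescribed outgoing labels coincide with the current ones. -/
def Stable (P : StatelessProtocol n E Λ) (x : Fin n → Bool)
    (ℓ : {e // e ∈ E} → Λ) : Prop :=
  ∀ e : {e // e ∈ E}, (P.react e.1.1 ℓ (x e.1.1)).1 e = ℓ e

/-- The labeling after `t` steps of the synchronous run (all nodes activated at
every step). -/
def syncRun (P : StatelessProtocol n E Λ) (x : Fin n → Bool)
    (ℓ0 : {e // e ∈ E} → Λ) : ℕ → {e // e ∈ E} → Λ :=
  P.run x (fun _ => Finset.univ) ℓ0

/-- The outputs at time step `t` of the synchronous run (the value at time `0`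
is a dummy value). -/
def syncOut (P : StatelessProtocol n E Λ) (x : Fin n → Bool)
    (ℓ0 : {e // e ∈ E} → Λ) : ℕ → Fin n → Bool
  | 0 => fun _ => false
  | t + 1 => fun i => (P.react i (P.syncRun x ℓ0 t) (x i)).2

/-- Output stabilization under the synchronous schedule. -/
def OutputStabilizing (P : StatelessProtocol n E Λ) : Prop :=
  ∀ x ℓ0, ∃ T, ∀ t, T ≤ t → P.syncOut x ℓ0 t = P.syncOut x ℓ0 T

/-- Label stabilization under the synchronous schedule. -/
def LabelStabilizing (P : StatelessProtocol n E Λ) : Prop :=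
  ∀ x ℓ0, ∃ T, ∀ t, T ≤ t → P.syncRun x ℓ0 t = P.syncRun x ℓ0 T

/-- `P` computes `f` if on every input and from every initial labeling, every
node's output sequence converges to `f x` under the synchronous schedule. -/
def Computes (P : StatelessProtocol n E Λ) (f : (Fin n → Bool) → Bool) : Prop :=
  ∀ x ℓ0, ∃ T, ∀ t, T ≤ t → ∀ i, P.syncOut x ℓ0 t i = f x

end StatelessProtocol

/-- The complete directed graph on `Fin n`. -/
def Kn (n : ℕ) : Finset (Fin n × Fin n) :=
  Finset.univ.filter (fun p => p.1 ≠ p.2)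

/-- The unidirectional `n`-ring: edges `(i, i + 1 mod n)`. -/
def uniRing (n : ℕ) : Finset (Fin n × Fin n) :=
  Finset.image (fun i : Fin n => (i, ⟨((i : ℕ) + 1) % n, Nat.mod_lt _ i.pos⟩)) Finset.univ

/-- The bidirectional `n`-ring: edges `(i, i ± 1 mod n)`. -/
def biRing (n : ℕ) : Finset (Fin n × Fin n) :=
  uniRing n ∪ (uniRing n).image (fun p => (p.2, p.1))

/-- The equality function: `1` iff the first half of the input equals the
second half. -/
def eqFun (n : ℕ) : (Fin n → Bool) → Bool := fun x =>
  decide (∀ i : Fin n, ∀ h : (i : ℕ) < n / 2, x i = x ⟨(i : ℕ) + n / 2, by omega⟩)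

/-
The cut between the two halves of the ring consists of only four edges. Feed the protocol the
`2^(n/2)` inputs `b b`, on which `EQ` is `1`, and fix a stable labeling for each. If two of them,
for `b` and `b'`, agree on the four cut edges, then gluing the first half of the first labeling to
the second half of the other yields a labeling that is stable for the input `b b'`; a node of the
first half sees there exactly what it sees for `b b`, so it outputs `1`, whence `b = b'`. Hence
`2^(n/2) ≤ |Σ|^4`, that is, `n/8 ≤ log₂|Σ|`.
-/

open Finset

namespace StatelessProtocol

variable {n : ℕ} {E : Finset (Fin n × Fin n)} {Λ : Type}

def edgeCut (E : Finset (Fin n × Fin n)) (S : Finset (Fin n)) : Finset {e // e ∈ E} :=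
  univ.filter fun e => (e.1.1 ∈ S ↔ e.1.2 ∉ S)

def splice (S : Finset (Fin n)) (ℓ ℓ' : {e // e ∈ E} → Λ) : {e // e ∈ E} → Λ :=
  fun e => if e.1.1 ∈ S then ℓ e else ℓ' e

theorem syncRun_succ (P : StatelessProtocol n E Λ) (x : Fin n → Bool) (ℓ0 : {e // e ∈ E} → Λ)
    (t : ℕ) :
    P.syncRun x ℓ0 (t + 1) = fun e => (P.react e.1.1 (P.syncRun x ℓ0 t) (x e.1.1)).1 e := by
  funext e
  simp [syncRun, run]

variable {P : StatelessProtocol n E Λ} {x x' : Fin n → Bool} {ℓ ℓ' : {e // e ∈ E} → Λ}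

theorem Stable.syncRun_eq (h : P.Stable x ℓ) (t : ℕ) : P.syncRun x ℓ t = ℓ := by
  induction t with
  | zero => rfl
  | succ t ih =>
    rw [syncRun_succ, ih]
    exact funext h

theorem LabelStabilizing.exists_stable [Nonempty Λ] (hls : P.LabelStabilizing)
    (x : Fin n → Bool) : ∃ ℓ, P.Stable x ℓ := by
  let ℓ0 : {e // e ∈ E} → Λ := fun _ => Classical.arbitrary Λ
  obtain ⟨T, hT⟩ := hls x ℓ0
  refine ⟨P.syncRun x ℓ0 T, fun e => ?_⟩
  have := congrFun (hT (T + 1) T.le_succ) e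
  rwa [syncRun_succ] at this

theorem Computes.output_eq_of_stable {f : (Fin n → Bool) → Bool} (hcomp : P.Computes f)
    (h : P.Stable x ℓ) (i : Fin n) : (P.react i ℓ (x i)).2 = f x := by
  obtain ⟨T, hT⟩ := hcomp x ℓ
  simpa only [syncOut, h.syncRun_eq] using hT (T + 1) T.le_succ i

variable {S : Finset (Fin n)}

theorem react_splice_of_mem (hcut : ∀ e ∈ edgeCut E S, ℓ e = ℓ' e) {i : Fin n} (hi : i ∈ S)
    (b : Bool) :
    P.react i (splice S ℓ ℓ') b = P.react i ℓ b :=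
  P.react_local _ _ _ _ fun e he => by
    unfold splice
    split_ifs with h
    · rfl
    · exact (hcut e (by simp [edgeCut, h, he, hi])).symm

theorem react_splice_of_notMem (hcut : ∀ e ∈ edgeCut E S, ℓ e = ℓ' e) {i : Fin n} (hi : i ∉ S)
    (b : Bool) :
    P.react i (splice S ℓ ℓ') b = P.react i ℓ' b :=
  P.react_local _ _ _ _ fun e he => by
    unfold splice
    split_ifs with h
    · exact hcut e (by simp [edgeCut, h, he, hi])
    · rfl

theorem Stable.splice_piecewise (hℓ : P.Stable x ℓ) (hℓ' : P.Stable x' ℓ')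
    (hcut : ∀ e ∈ edgeCut E S, ℓ e = ℓ' e) :
    P.Stable (S.piecewise x x') (splice S ℓ ℓ') := by
  intro e
  by_cases hi : e.1.1 ∈ S
  · rw [S.piecewise_eq_of_mem _ _ hi, react_splice_of_mem hcut hi, hℓ e]
    simp [splice, hi]
  · rw [S.piecewise_eq_of_notMem _ _ hi, react_splice_of_notMem hcut hi, hℓ' e]
    simp [splice, hi]

theorem card_le_pow_card_edgeCut [Fintype Λ] [Nonempty Λ] (hls : P.LabelStabilizing)
    {f : (Fin n → Bool) → Bool} (hcomp : P.Computes f) (hS : S.Nonempty)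
    {ι : Type*} [Fintype ι] (F : ι → Fin n → Bool)
    (hF : ∀ a b, f (S.piecewise (F a) (F b)) = f (F a) → a = b) :
    Fintype.card ι ≤ Fintype.card Λ ^ (edgeCut E S).card := by
  choose ℓ hℓ using hls.exists_stable
  obtain ⟨i, hi⟩ := hS
  let φ : ι → edgeCut E S → Λ := fun a e => ℓ (F a) e
  have hφ : φ.Injective := by
    intro a b hab
    have hcut : ∀ e ∈ edgeCut E S, ℓ (F a) e = ℓ (F b) e := fun e he => congrFun hab ⟨e, he⟩
    apply hF
    rw [← hcomp.output_eq_of_stable ((hℓ (F a)).splice_piecewise (hℓ (F b)) hcut) i,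
      S.piecewise_eq_of_mem _ _ hi, react_splice_of_mem hcut hi,
      hcomp.output_eq_of_stable (hℓ (F a))]
  simpa using Fintype.card_le_of_injective φ hφ

end StatelessProtocol

theorem mem_biRing_iff {n : ℕ} {i j : Fin n} :
    (i, j) ∈ biRing n ↔ ((i : ℕ) + 1) % n = j ∨ ((j : ℕ) + 1) % n = i := by
  simp only [biRing, uniRing, mem_union, mem_image, mem_univ, Prod.ext_iff, true_and,
    exists_eq_left, Prod.exists, ↓existsAndEq, exists_eq_right]
  simp only [Fin.ext_iff]

theorem Nat.add_one_mod_eq_ite {a n : ℕ} (h : a < n) :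
    (a + 1) % n = if a + 1 = n then 0 else a + 1 := by
  split_ifs with h'
  · rw [h', Nat.mod_self]
  · exact Nat.mod_eq_of_lt (by omega)

open StatelessProtocol in
theorem card_edgeCut_biRing_le (n k : ℕ) :
    (edgeCut (biRing n) (univ.filter fun i : Fin n => (i : ℕ) < k)).card ≤ 4 := by
  let ends : {e // e ∈ biRing n} → ℕ × ℕ := fun e => (e.1.1, e.1.2)
  calc (edgeCut (biRing n) (univ.filter fun i : Fin n => (i : ℕ) < k)).card
      ≤ ({(k - 1, k), (k, k - 1), (n - 1, 0), (0, n - 1)} : Finset (ℕ × ℕ)).card := by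
        refine card_le_card_of_injOn ends (fun e he => ?_) (fun e _ e' _ h => ?_)
        · obtain ⟨⟨i, j⟩, hij⟩ := e
          replace he : (i : ℕ) < k ↔ ¬(j : ℕ) < k := by simpa [edgeCut] using he
          rw [mem_biRing_iff, Nat.add_one_mod_eq_ite i.2, Nat.add_one_mod_eq_ite j.2] at hij
          simp only [ends, coe_insert, coe_singleton, Set.mem_insert_iff, Set.mem_singleton_iff,
            Prod.ext_iff]
          split_ifs at hij <;> omega
        · simp only [ends, Prod.ext_iff] at h
          exact Subtype.ext (Prod.ext (Fin.ext h.1) (Fin.ext h.2))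
    _ ≤ 4 := card_le_four

theorem eqFun_append {m : ℕ} (u v : Fin m → Bool) :
    eqFun (m + m) (Fin.append u v) = decide (u = v) := by
  have hm : (m + m) / 2 = m := by omega
  simp only [eqFun, decide_eq_decide, funext_iff]
  constructor
  · intro h j
    convert h (Fin.castAdd m j) (by simp [hm]) using 1
    · rw [Fin.append_left]
    · rw [← Fin.append_right u v j]
      congr 1
      ext
      simp [hm, add_comm]
  · intro h i hi
    have hi' : (i : ℕ) < m := by omega
    convert h ⟨i, hi'⟩ using 1
    · exact Fin.append_left u v ⟨i, hi'⟩
    · rw [← Fin.append_right u v ⟨i, hi'⟩]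
      congr 1
      ext
      simp [hm, add_comm]

theorem Fin.piecewise_append_append {α : Type*} {m k : ℕ} (u u' : Fin m → α)
    (v v' : Fin k → α) :
    (univ.filter fun i : Fin (m + k) => (i : ℕ) < m).piecewise (Fin.append u v)
      (Fin.append u' v') = Fin.append u v' := by
  funext i
  refine Fin.addCases (fun j => ?_) (fun j => ?_) i <;> simp [Finset.piecewise]

theorem le_mul_logb_of_two_pow_le {a k c : ℕ} (h : 2 ^ a ≤ c ^ k) :
    (a : ℝ) ≤ k * Real.logb 2 c := by
  have h' : (2 : ℝ) ^ a ≤ (c : ℝ) ^ k := by exact_mod_cast h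
  have := Real.logb_le_logb_of_le one_lt_two (by positivity) h'
  rwa [Real.logb_pow, Real.logb_pow, Real.logb_self_eq_one one_lt_two, mul_one] at this

open StatelessProtocol in
/-- Every label-stabilizing stateless protocol computing the
equality function on the bidirectional `n`-ring (`n ≥ 4` even) has label
complexity `log₂|Σ| ≥ (n - 2) / 8`. -/
theorem eq_label_complexity_lower_bound (n : ℕ) (hn : 4 ≤ n) (heven : Even n)
    {Λ : Type} [Fintype Λ] [Nonempty Λ]
    (P : StatelessProtocol n (biRing n) Λ)
    (hls : P.LabelStabilizing) (hcomp : P.Computes (eqFun n)) :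
    ((n : ℝ) - 2) / 8 ≤ Real.logb 2 (Fintype.card Λ) := by
  obtain ⟨m, rfl⟩ := heven
  set S := univ.filter fun i : Fin (m + m) => (i : ℕ) < m
  have hS : S.Nonempty := ⟨⟨0, by omega⟩, by simp [S]; omega⟩
  have hfool : ∀ a b : Fin m → Bool, eqFun (m + m) (S.piecewise (Fin.append a a)
      (Fin.append b b)) = eqFun (m + m) (Fin.append a a) → a = b := by
    intro a b h
    simpa [S, Fin.piecewise_append_append, eqFun_append] using h
  have hcard := card_le_pow_card_edgeCut hls hcomp hS _ hfool
  have h4 : 2 ^ m ≤ Fintype.card Λ ^ 4 := by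
    simpa using hcard.trans (Nat.pow_le_pow_right Fintype.card_pos (card_edgeCut_biRing_le _ _))
  have := le_mul_logb_of_two_pow_le h4
  push_cast at this ⊢
  linarith
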